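/- If ℓ and m are positive sequences such that for every h > 0 there exists C_h > 0 with ℓ_k ≤ C_h h^k m_k for all k, and C_h^• denotes the optimal (smallest) such constant, then the sequence ℓ̃_k = inf_{h>0} C_h^• h^k m_k satisfies: (ℓ̃_k/ℓ̃_0, normalized to 1 at k = 0) makes (m_k / (ℓ̃_k/ℓ̃_0)) log-convex, i.e., (m_k/ℓ̄_k)^2 ≤ (m_{k-1}/ℓ̄_{k-1})(m_{k+1}/ℓ̄_{k+1}) for all k ≥ 1, provided the infimum is attained for each k. -/

import Mathlib

/-!
After division by `m k`, `lt k / m k = min_{h > 0} Copt h * h ^ k` is a pointwise minimum of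
geometric sequences, each satisfying `a k * a (k + 2) = a (k + 1) ^ 2`. Comparing with the
sequence that attains the minimum at `k + 1` shows that the minimum is log-concave, so its
reciprocal, which is `m k / lbar k` up to the factor `lt 0`, is log-convex.
-/

open Set

theorem mul_le_sq_of_isLeast {ι : Type*} (s : Set ι) (a : ι → ℕ → ℝ) (q : ℕ → ℝ)
    (hq : ∀ k, IsLeast ((fun i => a i k) '' s) (q k)) (hq_nonneg : ∀ k, 0 ≤ q k)
    (ha : ∀ i ∈ s, ∀ k, a i k * a i (k + 2) ≤ a i (k + 1) ^ 2) (k : ℕ) :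
    q k * q (k + 2) ≤ q (k + 1) ^ 2 := by
  obtain ⟨⟨i, hi, hqi⟩, -⟩ := hq (k + 1)
  have hle : ∀ j, q j ≤ a i j := fun j => (hq j).2 ⟨i, hi, rfl⟩
  calc q k * q (k + 2) ≤ a i k * a i (k + 2) :=
        mul_le_mul (hle k) (hle (k + 2)) (hq_nonneg _) ((hq_nonneg k).trans (hle k))
    _ ≤ a i (k + 1) ^ 2 := ha i hi k
    _ = q (k + 1) ^ 2 := by rw [← hqi]

theorem div_sq_le_div_mul_div {q : ℕ → ℝ} (hq : ∀ k, 0 < q k) {k : ℕ}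
    (hk : q k * q (k + 2) ≤ q (k + 1) ^ 2) (c : ℝ) :
    (c / q (k + 1)) ^ 2 ≤ c / q k * (c / q (k + 2)) := by
  rw [div_pow, div_mul_div_comm, ← sq]
  exact div_le_div_of_nonneg_left (sq_nonneg c) (mul_pos (hq k) (hq (k + 2))) hk

theorem regularized_quotient_logconvex_general
    (l m : ℕ → ℝ) (hlpos : ∀ k, 0 < l k) (hmpos : ∀ k, 0 < m k)
    (Copt : ℝ → ℝ)
    -- Copt h is the optimal (smallest) constant C with l k ≤ C h^k m k
    (hCopt_bound : ∀ h : ℝ, 0 < h → ∀ k : ℕ, l k ≤ Copt h * h ^ k * m k)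
    (lt : ℕ → ℝ)
    -- lt k = inf over h > 0 of Copt h * h^k * m k, and the infimum is attained
    (hlt_le : ∀ k : ℕ, ∀ h : ℝ, 0 < h → lt k ≤ Copt h * h ^ k * m k)
    (hlt_attained : ∀ k : ℕ, ∃ h : ℝ, 0 < h ∧ lt k = Copt h * h ^ k * m k)
    (lbar : ℕ → ℝ) (hlbar : ∀ k, lbar k = lt k / lt 0) :
    ∀ k : ℕ, 1 ≤ k →
      (m k / lbar k) ^ 2 ≤ (m (k - 1) / lbar (k - 1)) * (m (k + 1) / lbar (k + 1)) := by
  have hlt_pos : ∀ k, 0 < lt k := fun k => by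
    obtain ⟨h, hh, hk⟩ := hlt_attained k
    exact hk ▸ (hlpos k).trans_le (hCopt_bound h hh k)
  set q : ℕ → ℝ := fun k => lt k / m k
  have hq_pos : ∀ k, 0 < q k := fun k => div_pos (hlt_pos k) (hmpos k)
  have hq_least : ∀ k, IsLeast ((fun h => Copt h * h ^ k) '' Ioi 0) (q k) := fun k => by
    obtain ⟨h, hh, hk⟩ := hlt_attained k
    refine ⟨⟨h, hh, by simp [q, hk, (hmpos k).ne']⟩, ?_⟩
    rintro _ ⟨h', hh', rfl⟩
    exact (div_le_iff₀ (hmpos k)).2 (hlt_le k h' hh')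
  have hq_logConcave := mul_le_sq_of_isLeast (Ioi 0) (fun h k => Copt h * h ^ k) q hq_least
    (fun k => (hq_pos k).le) (fun h _ k => (by ring : _ = _).le)
  have hquot : ∀ k, m k / lbar k = lt 0 / q k := fun k => by
    rw [hlbar]
    simp only [q]
    field_simp [(hlt_pos 0).ne', (hlt_pos k).ne', (hmpos k).ne']
  rintro k hk
  obtain ⟨n, rfl⟩ : ∃ n, k = n + 1 := ⟨k - 1, by omega⟩
  simpa only [hquot, Nat.add_sub_cancel] using div_sq_le_div_mul_div hq_pos (hq_logConcave n) (lt 0)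

theorem regularized_quotient_logconvex
    (l m : ℕ → ℝ) (hlpos : ∀ k, 0 < l k) (hmpos : ∀ k, 0 < m k)
    (hdom : ∀ h : ℝ, 0 < h → ∃ C : ℝ, 0 < C ∧ ∀ k : ℕ, l k ≤ C * h ^ k * m k)
    (Copt : ℝ → ℝ)
    -- Copt h is the optimal (smallest) constant C with l k ≤ C h^k m k
    (hCopt_bound : ∀ h : ℝ, 0 < h → ∀ k : ℕ, l k ≤ Copt h * h ^ k * m k)
    (hCopt_min : ∀ h : ℝ, 0 < h → ∀ C : ℝ,
      (∀ k : ℕ, l k ≤ C * h ^ k * m k) → Copt h ≤ C)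
    (lt : ℕ → ℝ)
    -- lt k = inf over h > 0 of Copt h * h^k * m k, and the infimum is attained
    (hlt_le : ∀ k : ℕ, ∀ h : ℝ, 0 < h → lt k ≤ Copt h * h ^ k * m k)
    (hlt_attained : ∀ k : ℕ, ∃ h : ℝ, 0 < h ∧ lt k = Copt h * h ^ k * m k)
    (lbar : ℕ → ℝ) (hlbar : ∀ k, lbar k = lt k / lt 0) :
    ∀ k : ℕ, 1 ≤ k →
      (m k / lbar k) ^ 2 ≤ (m (k - 1) / lbar (k - 1)) * (m (k + 1) / lbar (k + 1)) :=
  regularized_quotient_logconvex_general l m hlpos hmpos Copt hCopt_bound lt hlt_le hlt_attained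
    lbar hlbar
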